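/- arXiv:2304.14676 — 4 statements merged into one kernel-verified Lean document; each statement's English description precedes it below -/
import Mathlib

section
/- The N×N Cauchy-Vandermonde matrix CSA^q_{N,L}(α,f), whose first L columns have (i,j) entry 1/(f_j − α_i) and whose remaining N−L columns have (i,j) entry α_i^{j-1}, is invertible whenever α_1,...,α_N, f_1,...,f_L are N+L pairwise distinct elements of F_q. -/
open Matrix

/-- The Cauchy–Vandermonde matrix of CSA schemes: first `L` columns have entries
`1/(f j - α i)`, remaining `N - L` columns have entries `α i ^ (j - L)`. -/
def CSAMatrixCV {F : Type*} [Field F] (N L : ℕ) (α : Fin N → F) (f : Fin L → F) :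
    Matrix (Fin N) (Fin N) F :=
  Matrix.of fun i j =>
    if h : (j : ℕ) < L then (f ⟨j, h⟩ - α i)⁻¹ else α i ^ ((j : ℕ) - L)

/-!
Multiplying row `i` of `CSAMatrixCV N L α f` by `∏ k, (α i - f k)` turns it into the row of
values at `α i` of `N` polynomials of degree `< N`: `-∏_{k ≠ j} (X - f k)` for `j < L` and
`X ^ (j - L) * ∏_k (X - f k)` for `j ≥ L`. As the `α i` are `N` distinct points, the matrix is
invertible as soon as these polynomials are linearly independent. In a vanishing combination,
evaluating at `f j` kills every polynomial but the `j`-th, so the Cauchy coefficients vanish; what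
is left is a multiple of `∏_k (X - f k)` by a polynomial whose coefficients are the remaining ones.
-/

open Polynomial Finset Lagrange

theorem isUnit_of_eval_of_linearIndependent {F ι : Type*} [Field F] [Fintype ι] [DecidableEq ι]
    {α : ι → F} (hα : Function.Injective α) {p : ι → F[X]} (hp : LinearIndependent F p)
    (hdeg : ∀ j, (p j).degree < Fintype.card ι) :
    IsUnit (Matrix.of fun i j => (p j).eval (α i)) := by
  rw [isUnit_iff_isUnit_det, isUnit_iff_ne_zero]
  intro hdet
  obtain ⟨c, hc0, hc⟩ := exists_mulVec_eq_zero_iff.mpr hdet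
  have hsum : ∑ j, c j • p j = 0 := by
    refine eq_zero_of_degree_lt_of_eval_index_eq_zero (s := univ) hα.injOn ?_ fun i _ => ?_
    · rw [card_univ, ← mem_degreeLT]
      exact Submodule.sum_mem _ fun j _ => Submodule.smul_mem _ _ (mem_degreeLT.mpr (hdeg j))
    · simpa [eval_finsetSum, mulVec, dotProduct, mul_comm] using congrFun hc i
  exact hc0 (funext (Fintype.linearIndependent_iff.mp hp c hsum))

namespace CauchyVandermonde

variable {F : Type*} [Field F] {N L : ℕ}

noncomputable def columnPoly (f : Fin L → F) (j : Fin N) : F[X] :=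
  if h : (j : ℕ) < L then -nodal (univ.erase ⟨j, h⟩) f else X ^ ((j : ℕ) - L) * nodal univ f

theorem degree_columnPoly_lt (f : Fin L → F) (hL : L ≤ N) (j : Fin N) :
    (columnPoly f j).degree < N := by
  unfold columnPoly
  split_ifs with h
  · rw [degree_neg, degree_nodal, card_erase_of_mem (mem_univ _), card_univ, Fintype.card_fin]
    exact_mod_cast (by omega : L - 1 < N)
  · rw [degree_mul, degree_X_pow, degree_nodal, card_univ, Fintype.card_fin]
    exact_mod_cast (by omega : (j : ℕ) - L + L < N)

theorem eval_nodal_mul_CSAMatrixCV {α : Fin N → F} {f : Fin L → F} {i : Fin N}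
    (hαf : ∀ k, α i ≠ f k) (j : Fin N) :
    (nodal univ f).eval (α i) * CSAMatrixCV N L α f i j = (columnPoly f j).eval (α i) := by
  unfold CSAMatrixCV columnPoly
  split_ifs with h
  · have hne : f ⟨j, h⟩ - α i ≠ 0 := sub_ne_zero.mpr (hαf _).symm
    rw [of_apply, dif_pos h, nodal_eq_mul_nodal_erase (mem_univ ⟨j, h⟩), eval_mul, eval_neg,
      eval_sub, eval_X, eval_C]
    field_simp
    ring
  · rw [of_apply, dif_neg h, eval_mul, eval_pow, eval_X, mul_comm]

theorem eval_columnPoly_node_eq_zero_iff {f : Fin L → F} (hf : Function.Injective f) (j : Fin N)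
    (k : Fin L) : (columnPoly f j).eval (f k) = 0 ↔ (j : ℕ) ≠ k := by
  unfold columnPoly
  split_ifs with h
  · rw [eval_neg, neg_eq_zero]
    constructor
    · intro hzero hjk
      obtain rfl : k = ⟨j, h⟩ := Fin.ext hjk.symm
      refine eval_nodal_not_at_node (fun k' hk' hfk => ?_) hzero
      exact (mem_erase.mp hk').1 (hf hfk).symm
    · intro hjk
      exact eval_nodal_at_node (mem_erase.mpr ⟨fun hk => hjk (by rw [hk]), mem_univ _⟩)
  · simp only [eval_mul, eval_nodal_at_node (mem_univ k), mul_zero, true_iff]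
    omega

theorem linearIndependent_columnPoly {f : Fin L → F} (hf : Function.Injective f) :
    LinearIndependent F (columnPoly (N := N) f) := by
  rw [Fintype.linearIndependent_iff]
  intro c hc
  have hlow : ∀ j : Fin N, (j : ℕ) < L → c j = 0 := by
    intro j hj
    have hval := congrArg (Polynomial.eval (f ⟨j, hj⟩)) hc
    rw [eval_finsetSum, sum_eq_single j, eval_smul, smul_eq_mul, eval_zero] at hval
    · exact (mul_eq_zero.mp hval).resolve_right
        ((eval_columnPoly_node_eq_zero_iff hf j _).not.mpr (by simp))
    · intro j' _ hj'
      have hvanish := (eval_columnPoly_node_eq_zero_iff hf j' ⟨j, hj⟩).mpr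
        (by simpa [Fin.ext_iff] using hj')
      rw [eval_smul, hvanish, smul_zero]
    · simp
  have hQ : ∑ j, C (c j) * X ^ ((j : ℕ) - L) = 0 := by
    refine (mul_eq_zero.mp ?_).resolve_right (nodal_ne_zero (s := univ) (v := f))
    rw [← hc, sum_mul]
    refine sum_congr rfl fun j _ => ?_
    unfold columnPoly
    split_ifs with h
    · simp [hlow j h]
    · rw [smul_eq_C_mul, mul_assoc]
  intro j
  by_cases hj : (j : ℕ) < L
  · exact hlow j hj
  have hcoeff := congrArg (coeff · ((j : ℕ) - L)) hQ
  simp only [finsetSum_coeff, coeff_C_mul_X_pow, coeff_zero] at hcoeff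
  rw [sum_eq_single j ?_ (by simp), if_pos rfl] at hcoeff
  · exact hcoeff
  · intro j' _ hj'
    refine ite_eq_right_iff.mpr fun hexp => hlow j' ?_
    by_contra
    exact hj' (Fin.ext (by omega))

end CauchyVandermonde

open CauchyVandermonde in
theorem csa_invertible_general {F : Type*} [Field F] (N L : ℕ) (hL : L ≤ N)
    (α : Fin N → F) (f : Fin L → F)
    (hdist : Function.Injective (Sum.elim α f)) :
    IsUnit (CSAMatrixCV N L α f) := by
  have hα : Function.Injective α := hdist.comp Sum.inl_injective
  have hf : Function.Injective f := hdist.comp Sum.inr_injective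
  have hαf : ∀ i k, α i ≠ f k := fun i k h => Sum.inl_ne_inr (hdist h)
  have hscaled : diagonal (fun i => (nodal univ f).eval (α i)) * CSAMatrixCV N L α f =
      Matrix.of fun i j => (columnPoly f j).eval (α i) := by
    ext i j
    rw [diagonal_mul, of_apply, eval_nodal_mul_CSAMatrixCV (hαf i)]
  have hunit := isUnit_of_eval_of_linearIndependent hα (linearIndependent_columnPoly hf)
    (by simpa using degree_columnPoly_lt f hL)
  rw [← hscaled, isUnit_iff_isUnit_det, det_mul, IsUnit.mul_iff] at hunit
  exact (isUnit_iff_isUnit_det _).mpr hunit.2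

theorem csa_invertible {F : Type*} [Field F] [Fintype F] (N L : ℕ) (hL : L ≤ N)
    (hq : N + L ≤ Fintype.card F) (α : Fin N → F) (f : Fin L → F)
    (hdist : Function.Injective (Sum.elim α f)) :
    IsUnit (CSAMatrixCV N L α f) :=
  csa_invertible_general N L hL α f hdist
end

section
/- Let G be the 2N×N block-diagonal matrix with upper-left block GRS^q_{N,⌈N/2⌉}(α,u) and lower-right block GRS^q_{N,⌊N/2⌋}(α,v), where v_j = u_j^{-1}·(∏_{i≠j}(α_j − α_i))^{-1}. Then GᵀJG = 0, where J = [[0, −I_N],[I_N, 0]]. -/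
/-!
Write `A = GRS(α, u)` and `B = GRS(α, v)`. By the block structure, `Gᵀ J G` has off-diagonal
blocks `-(Aᵀ B)` and `(Aᵀ B)ᵀ`, so everything reduces to `Aᵀ B = 0`. Since `u i * v i` is the
nodal weight `∏_{k ≠ i} (α i - α k)⁻¹`, the entry `(a, b)` of `Aᵀ B` is
`∑ i, nodalWeight i * f (α i)` with `f = X ^ (a + b)`. For any `f` of degree `< N` this sum is the
coefficient of `X ^ (N - 1)` in the Lagrange interpolant of `f`, i.e. in `f` itself, and
`a + b ≤ N - 2` because the two code dimensions add up to `N`.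
-/

open Matrix

/-- Generator matrix of a Generalized Reed-Solomon code: entry (i,j) is `w i * (α i)^j`. -/
def GRS {F : Type*} [Field F] (n k : ℕ) (α w : Fin n → F) : Matrix (Fin n) (Fin k) F :=
  Matrix.of fun i j => w i * α i ^ (j : ℕ)

namespace Lagrange

open Polynomial Finset

variable {F ι : Type*} [Field F] [DecidableEq ι] {s : Finset ι} {v : ι → F}

theorem coeff_nodal_div_X_sub_C {i : ι} (hi : i ∈ s) :
    (nodal s v / (X - C (v i))).coeff (#s - 1) = 1 := by
  rw [← nodal_erase_eq_nodal_div hi, ← card_erase_of_mem hi, ← natDegree_nodal (v := v)]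
  exact nodal_monic.coeff_natDegree

theorem sum_nodalWeight_mul_eval_eq_coeff (hvs : Set.InjOn v s) {f : F[X]}
    (hf : f.degree < #s) :
    ∑ i ∈ s, nodalWeight s v i * f.eval (v i) = f.coeff (#s - 1) := by
  conv_rhs => rw [eq_interpolate hvs hf, interpolate_eq_nodalWeight_mul_nodal_div_X_sub_C]
  simp only [finsetSum_coeff, coeff_mul_C, coeff_C_mul]
  refine sum_congr rfl fun i hi => ?_
  rw [coeff_nodal_div_X_sub_C hi, mul_one]

theorem sum_nodalWeight_mul_eval_eq_zero (hvs : Set.InjOn v s) {f : F[X]}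
    (hf : f.natDegree + 1 < #s) :
    ∑ i ∈ s, nodalWeight s v i * f.eval (v i) = 0 := by
  rw [sum_nodalWeight_mul_eval_eq_coeff hvs
    ((degree_le_natDegree).trans_lt (by exact_mod_cast hf.trans' (Nat.lt_succ_self _))),
    coeff_eq_zero_of_natDegree_lt (by omega)]

end Lagrange

theorem GRS_transpose_mul_GRS_apply {F : Type*} [Field F] {n k l : ℕ} (α u w : Fin n → F)
    (a : Fin k) (b : Fin l) :
    ((GRS n k α u)ᵀ * GRS n l α w) a b = ∑ i, u i * w i * α i ^ ((a : ℕ) + b) := by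
  simp only [mul_apply, transpose_apply, GRS, of_apply, pow_add]
  exact Finset.sum_congr rfl fun i _ => by ring

theorem GRS_transpose_mul_GRS_dual_eq_zero {F : Type*} [Field F] {N k l : ℕ}
    {α u v : Fin N → F} (hα : Function.Injective α) (hu : ∀ i, u i ≠ 0)
    (hv : ∀ j, v j = (u j)⁻¹ * (∏ i ∈ Finset.univ.erase j, (α j - α i))⁻¹)
    (hkl : k + l ≤ N) :
    (GRS N k α u)ᵀ * GRS N l α v = 0 := by
  ext a b
  have huv : ∀ i, u i * v i = Lagrange.nodalWeight Finset.univ α i := fun i => by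
    rw [hv, mul_inv_cancel_left₀ (hu i), Lagrange.nodalWeight, Finset.prod_inv_distrib]
  have hdeg : (Polynomial.X ^ ((a : ℕ) + b) : Polynomial F).natDegree + 1 <
      (Finset.univ : Finset (Fin N)).card := by
    rw [Polynomial.natDegree_X_pow, Finset.card_univ, Fintype.card_fin]; omega
  simpa [GRS_transpose_mul_GRS_apply, huv] using
    Lagrange.sum_nodalWeight_mul_eval_eq_zero hα.injOn hdeg

theorem fromBlocks_transpose_mul_symplectic_mul_fromBlocks {R m n p : Type*} [CommRing R]
    [Fintype m] [Fintype n] [Fintype p] [DecidableEq m]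
    (A : Matrix m n R) (B : Matrix m p R) :
    (fromBlocks A 0 0 B)ᵀ * (fromBlocks 0 (-1) 1 0 : Matrix (m ⊕ m) (m ⊕ m) R) *
      fromBlocks A 0 0 B =
      fromBlocks 0 (-(Aᵀ * B)) (Aᵀ * B)ᵀ 0 := by
  rw [fromBlocks_transpose, fromBlocks_multiply, fromBlocks_multiply, transpose_mul,
    transpose_transpose]
  simp

theorem qcsa_G_self_orthogonal_general {F : Type*} [Field F] (N : ℕ)
    (α u v : Fin N → F) (hα : Function.Injective α) (hu : ∀ i, u i ≠ 0)
    (hv : ∀ j, v j = (u j)⁻¹ * (∏ i ∈ Finset.univ.erase j, (α j - α i))⁻¹)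
    (G : Matrix (Fin N ⊕ Fin N) (Fin ((N + 1) / 2) ⊕ Fin (N / 2)) F)
    (hG : G = Matrix.fromBlocks (GRS N ((N + 1) / 2) α u) 0 0 (GRS N (N / 2) α v))
    (J : Matrix (Fin N ⊕ Fin N) (Fin N ⊕ Fin N) F)
    (hJ : J = Matrix.fromBlocks 0 (-1) 1 0) :
    Gᵀ * J * G = 0 := by
  have hdual := GRS_transpose_mul_GRS_dual_eq_zero (k := (N + 1) / 2) (l := N / 2) hα hu hv
    (by omega)
  rw [hG, hJ, fromBlocks_transpose_mul_symplectic_mul_fromBlocks, hdual]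
  simp

theorem qcsa_G_self_orthogonal {F : Type*} [Field F] [Fintype F] (N : ℕ) (hN : 1 ≤ N)
    (α u v : Fin N → F) (hα : Function.Injective α) (hu : ∀ i, u i ≠ 0)
    (hv : ∀ j, v j = (u j)⁻¹ * (∏ i ∈ Finset.univ.erase j, (α j - α i))⁻¹)
    (G : Matrix (Fin N ⊕ Fin N) (Fin ((N + 1) / 2) ⊕ Fin (N / 2)) F)
    (hG : G = Matrix.fromBlocks (GRS N ((N + 1) / 2) α u) 0 0 (GRS N (N / 2) α v))
    (J : Matrix (Fin N ⊕ Fin N) (Fin N ⊕ Fin N) F)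
    (hJ : J = Matrix.fromBlocks 0 (-1) 1 0) :
    Gᵀ * J * G = 0 :=
  qcsa_G_self_orthogonal_general N α u v hα hu hv G hG J hJ
end

section
/- For 2L ≤ N, if the classical CSA scheme recovers L desired symbols per N downloaded dits (rate L/N), then the quantum CSA scheme recovers 2L desired symbols per N downloaded qudits, achieving rate 2L/N = 2·(L/N): formally, applying the N×2N matrix M_Q to the stacked scaled answer vector [Diag(u)·CSA·x(1); Diag(v)·CSA·x(2)] yields a vector containing all entries δ_1(1),...,δ_L(1) and δ_1(2),...,δ_L(2) of the two desired-symbol blocks. -/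
open Matrix

/-- The Cauchy–Vandermonde matrix of CSA schemes. -/
def CSAq {F : Type*} [Field F] (N L : ℕ) (α : Fin N → F) (f : Fin L → F) :
    Matrix (Fin N) (Fin N) F :=
  Matrix.of fun i j =>
    if h : (j : ℕ) < L then (f ⟨j, h⟩ - α i)⁻¹ else α i ^ ((j : ℕ) - L)

/-- The N×2N selection matrix of the QCSA scheme. -/
def selMat (F : Type*) [Field F] (N L : ℕ) : Matrix (Fin N) (Fin N ⊕ Fin N) F :=
  Matrix.of fun i j =>
    match j with
    | Sum.inl j' =>
        if ((i : ℕ) < L ∧ (j' : ℕ) = (i : ℕ)) ∨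
           (L ≤ (i : ℕ) ∧ (i : ℕ) < N / 2 ∧ (j' : ℕ) = (i : ℕ) + (N + 1) / 2) then 1 else 0
    | Sum.inr j' =>
        if (N / 2 ≤ (i : ℕ) ∧ (i : ℕ) < N / 2 + L ∧ (j' : ℕ) = (i : ℕ) - N / 2) ∨
           (N / 2 + L ≤ (i : ℕ) ∧ (j' : ℕ) = (i : ℕ)) then 1 else 0

/-!
`M_Q = S · B⁻¹` with `B = Block-Diag(Q^u, Q^v)`, and the stacked answer vector is
`B · [x(1); x(2)]`, so the N-sum box returns `S · [x(1); x(2)]`; since `L ≤ N/2`, row `l < L`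
of `S` picks `x(1)_l` and row `N/2 + l` picks `x(2)_l`. What needs proof is that `B` is
invertible, i.e. that `CSA` is (`v` has no zero entry because the `α_i` are distinct).
If `CSA x = 0`, then `∏_k (X - f_k) · (∑_{j<L} x_j / (f_j - X) + ∑_{j≥L} x_j X^{j-L})` is a
polynomial of degree `< N` vanishing at the `N` distinct points `α_i`, hence zero. Evaluating
it at `f_j` gives `x_j = 0` for `j < L`, and what remains is `∏_k (X - f_k)` times the
polynomial `∑_{j≥L} x_j X^{j-L}`, which therefore vanishes too.
-/

open Polynomial Lagrange Finset Function

section CauchyVandermonde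

variable {F : Type*} [Field F] {N L : ℕ}

noncomputable def csaColumnPoly (f : Fin L → F) (j : ℕ) : F[X] :=
  if h : j < L then -nodal (univ.erase ⟨j, h⟩) f else X ^ (j - L) * nodal univ f

theorem eval_csaColumnPoly (α : Fin N → F) (f : Fin L → F) (i j : Fin N)
    (hαf : ∀ k, f k ≠ α i) :
    (csaColumnPoly f j).eval (α i) = (nodal univ f).eval (α i) * CSAq N L α f i j := by
  unfold csaColumnPoly CSAq
  split_ifs with h
  · have hne : f ⟨j, h⟩ - α i ≠ 0 := sub_ne_zero.mpr (hαf _)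
    rw [nodal_eq_mul_nodal_erase (mem_univ (⟨j, h⟩ : Fin L))]
    simp only [eval_neg, eval_mul, eval_sub, eval_X, eval_C, of_apply, dif_pos h]
    field_simp
    ring
  · simp only [eval_mul, eval_pow, eval_X, of_apply, dif_neg h, mul_comm]

theorem degree_csaColumnPoly_lt (f : Fin L → F) {j : ℕ} (hj : j < N) (hLN : L ≤ N) :
    (csaColumnPoly f j).degree < N := by
  unfold csaColumnPoly
  split_ifs with h
  · rw [degree_neg, degree_nodal, card_erase_of_mem (mem_univ _), card_univ, Fintype.card_fin]
    exact_mod_cast (by omega : L - 1 < N)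
  · rw [degree_mul, degree_X_pow, degree_nodal, card_univ, Fintype.card_fin]
    exact_mod_cast (by omega : j - L + L < N)

theorem eval_node_csaColumnPoly (f : Fin L → F) (j : ℕ) (k : Fin L) :
    (csaColumnPoly f j).eval (f k) =
      if j = k then -(nodal (univ.erase k) f).eval (f k) else 0 := by
  unfold csaColumnPoly
  split_ifs with h hjk hjk
  · obtain rfl : (⟨j, h⟩ : Fin L) = k := Fin.ext hjk
    rw [eval_neg]
  · have hk : k ∈ univ.erase (⟨j, h⟩ : Fin L) :=
      mem_erase.mpr ⟨fun hc => hjk (by rw [hc]), mem_univ _⟩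
    rw [eval_neg, eval_nodal_at_node hk, neg_zero]
  · exact absurd (hjk ▸ k.isLt) h
  · rw [eval_mul, eval_nodal_at_node (mem_univ k), mul_zero]

theorem CSAq_mulVec_eq_zero {α : Fin N → F} {f : Fin L → F} (hLN : L ≤ N)
    (hdist : Injective (Sum.elim α f)) {x : Fin N → F} (hx : CSAq N L α f *ᵥ x = 0) :
    x = 0 := by
  have hα : Injective α := hdist.comp Sum.inl_injective
  have hf : Injective f := hdist.comp Sum.inr_injective
  set P := ∑ j : Fin N, x j • csaColumnPoly f j with hP
  have hP_eval (i : Fin N) :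
      P.eval (α i) = (nodal univ f).eval (α i) * (CSAq N L α f *ᵥ x) i := by
    simp only [hP, eval_finsetSum, eval_smul, smul_eq_mul,
      eval_csaColumnPoly α f i _ fun k h => Sum.inr_ne_inl (hdist h), mulVec, dotProduct,
      mul_sum]
    exact sum_congr rfl fun j _ => by ring
  have hP0 : P = 0 := by
    refine eq_zero_of_degree_lt_of_eval_index_eq_zero univ hα.injOn ?_ fun i _ => by
      rw [hP_eval, hx, Pi.zero_apply, mul_zero]
    rw [card_univ, Fintype.card_fin, ← mem_degreeLT]
    exact Submodule.sum_mem _ fun j _ => Submodule.smul_mem _ _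
      (mem_degreeLT.mpr (degree_csaColumnPoly_lt f j.isLt hLN))
  have hlow (j : Fin N) (hj : (j : ℕ) < L) : x j = 0 := by
    have hnode : (nodal (univ.erase ⟨j, hj⟩) f).eval (f ⟨j, hj⟩) ≠ 0 :=
      eval_nodal_not_at_node fun k hk => hf.ne (ne_of_mem_erase hk).symm
    have := congrArg (Polynomial.eval (f ⟨j, hj⟩)) hP0
    rw [hP, eval_finsetSum, sum_eq_single j] at this
    · simpa [eval_node_csaColumnPoly, hnode] using this
    · intro b _ hbj
      rw [eval_smul, eval_node_csaColumnPoly, if_neg (fun h => hbj (Fin.ext h)), smul_zero]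
    · exact fun h => absurd (mem_univ j) h
  set R := ∑ j : Fin N, x j • (X : F[X]) ^ ((j : ℕ) - L) with hR
  have hR0 : R = 0 := by
    refine (mul_eq_zero.mp ?_).resolve_right (nodal_ne_zero (s := univ) (v := f))
    rw [← hP0, hR, hP, sum_mul]
    refine sum_congr rfl fun j _ => ?_
    by_cases hj : (j : ℕ) < L
    · rw [hlow j hj, zero_smul, zero_smul, zero_mul]
    · rw [csaColumnPoly, dif_neg hj, smul_mul_assoc]
  funext j
  by_cases hj : (j : ℕ) < L
  · exact hlow j hj
  have := congrArg (coeff · ((j : ℕ) - L)) hR0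
  simp only [hR, finsetSum_coeff, coeff_smul, coeff_X_pow, smul_eq_mul, mul_ite, mul_one,
    mul_zero, coeff_zero] at this
  rwa [sum_eq_single j (fun b _ hbj => ?_) (fun h => absurd (mem_univ j) h), if_pos rfl] at this
  by_cases hb : (b : ℕ) < L
  · rw [hlow b hb, ite_self]
  · exact if_neg fun h => hbj (Fin.ext (by omega))

theorem isUnit_CSAq {α : Fin N → F} {f : Fin L → F} (hLN : L ≤ N)
    (hdist : Injective (Sum.elim α f)) : IsUnit (CSAq N L α f) :=
  mulVec_injective_iff_isUnit.mp fun y z h =>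
    sub_eq_zero.mp (CSAq_mulVec_eq_zero hLN hdist (by rw [mulVec_sub, h, sub_self]))

end CauchyVandermonde

theorem Matrix.mul_nonsing_inv_mulVec_mulVec {m n R : Type*} [Fintype n] [DecidableEq n]
    [CommRing R] (A : Matrix m n R) {B : Matrix n n R} (hB : IsUnit B) (y : n → R) :
    (A * B⁻¹) *ᵥ (B *ᵥ y) = A *ᵥ y := by
  rw [mulVec_mulVec, Matrix.mul_assoc, nonsing_inv_mul _ ((isUnit_iff_isUnit_det B).mp hB),
    Matrix.mul_one]

section Selection

variable {F : Type*} [Field F] {N L : ℕ}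

theorem selMat_row_of_lt (hL : 2 * L ≤ N) {l : Fin N} (hl : (l : ℕ) < L) :
    selMat F N L l = Pi.single (Sum.inl l) 1 := by
  funext j
  rcases j with j | j <;> simp [selMat, Pi.single_apply, Fin.ext_iff] <;> (try split_ifs) <;>
    first | rfl | omega

theorem selMat_row_of_le_of_lt (hL : 2 * L ≤ N) {l : Fin N} (hl₁ : N / 2 ≤ (l : ℕ))
    (hl₂ : (l : ℕ) < N / 2 + L) (h : (l : ℕ) - N / 2 < N) :
    selMat F N L l = Pi.single (Sum.inr ⟨(l : ℕ) - N / 2, h⟩) 1 := by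
  funext j
  rcases j with j | j <;> simp [selMat, Pi.single_apply, Fin.ext_iff] <;> (try split_ifs) <;>
    first | rfl | omega

end Selection

theorem qcsa_scheme_rate_general {F : Type*} [Field F] (N L : ℕ)
    (h2L : 2 * L ≤ N)
    (α : Fin N → F) (f : Fin L → F) (hdist : Function.Injective (Sum.elim α f))
    (u v : Fin N → F) (hu : ∀ i, u i ≠ 0)
    (hv : ∀ j, v j = (u j)⁻¹ * (∏ i ∈ Finset.univ.erase j, (α j - α i))⁻¹)
    (x1 x2 : Fin N → F)
    (a : (Fin N ⊕ Fin N) → F)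
    (ha : a = Sum.elim (fun n => u n * (CSAq N L α f *ᵥ x1) n)
                       (fun n => v n * (CSAq N L α f *ᵥ x2) n))
    (MQ : Matrix (Fin N) (Fin N ⊕ Fin N) F)
    (hMQ : MQ = selMat F N L *
      (Matrix.fromBlocks (Matrix.diagonal u * CSAq N L α f) 0 0
        (Matrix.diagonal v * CSAq N L α f))⁻¹) :
    (∀ l : Fin N, (l : ℕ) < L → (MQ *ᵥ a) l = x1 l) ∧
    (∀ l : Fin N, N / 2 ≤ (l : ℕ) → (l : ℕ) < N / 2 + L →
      ∀ h : (l : ℕ) - N / 2 < N, (MQ *ᵥ a) l = x2 ⟨(l : ℕ) - N / 2, h⟩) := by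
  have hα : Injective α := hdist.comp Sum.inl_injective
  have hv0 (j : Fin N) : v j ≠ 0 := by
    rw [hv j]
    exact mul_ne_zero (inv_ne_zero (hu j)) (inv_ne_zero (prod_ne_zero_iff.mpr fun i hi =>
      sub_ne_zero.mpr fun h => ne_of_mem_erase hi (hα h).symm))
  have hCSA := isUnit_CSAq (by omega) hdist
  have hscaled {w : Fin N → F} (hw : ∀ i, w i ≠ 0) : IsUnit (diagonal w * CSAq N L α f) :=
    (isUnit_diagonal.mpr (Pi.isUnit_iff.mpr fun i => (hw i).isUnit)).mul hCSA
  have ha' : a = fromBlocks (diagonal u * CSAq N L α f) 0 0 (diagonal v * CSAq N L α f) *ᵥ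
      Sum.elim x1 x2 := by
    rw [ha, fromBlocks_mulVec]
    ext (n | n) <;> simp [← mulVec_mulVec, mulVec_diagonal]
  have hrecover : MQ *ᵥ a = selMat F N L *ᵥ Sum.elim x1 x2 := by
    rw [hMQ, ha', mul_nonsing_inv_mulVec_mulVec _
      (isUnit_fromBlocks_zero₂₁.mpr ⟨hscaled hu, hscaled hv0⟩)]
  refine ⟨fun l hl => ?_, fun l hl₁ hl₂ h => ?_⟩
  · rw [hrecover, mulVec, selMat_row_of_lt h2L hl, single_one_dotProduct, Sum.elim_inl]
  · rw [hrecover, mulVec, selMat_row_of_le_of_lt h2L hl₁ hl₂ h, single_one_dotProduct,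
      Sum.elim_inr]

/-- The quantum CSA scheme recovers the `2L` desired symbols (the first `L` entries of each
of the two instances) from the `N` outputs of the N-sum box, i.e., rate `2L/N`. -/
theorem qcsa_scheme_rate {F : Type*} [Field F] [Fintype F] (N L : ℕ) (hN : 1 ≤ N)
    (h2L : 2 * L ≤ N) (hq : N + L ≤ Fintype.card F)
    (α : Fin N → F) (f : Fin L → F) (hdist : Function.Injective (Sum.elim α f))
    (u v : Fin N → F) (hu : ∀ i, u i ≠ 0)
    (hv : ∀ j, v j = (u j)⁻¹ * (∏ i ∈ Finset.univ.erase j, (α j - α i))⁻¹)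
    (x1 x2 : Fin N → F)
    (a : (Fin N ⊕ Fin N) → F)
    (ha : a = Sum.elim (fun n => u n * (CSAq N L α f *ᵥ x1) n)
                       (fun n => v n * (CSAq N L α f *ᵥ x2) n))
    (MQ : Matrix (Fin N) (Fin N ⊕ Fin N) F)
    (hMQ : MQ = selMat F N L *
      (Matrix.fromBlocks (Matrix.diagonal u * CSAq N L α f) 0 0
        (Matrix.diagonal v * CSAq N L α f))⁻¹) :
    (∀ l : Fin N, (l : ℕ) < L → (MQ *ᵥ a) l = x1 l) ∧
    (∀ l : Fin N, N / 2 ≤ (l : ℕ) → (l : ℕ) < N / 2 + L →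
      ∀ h : (l : ℕ) - N / 2 < N, (MQ *ᵥ a) l = x2 ⟨(l : ℕ) - N / 2, h⟩) :=
  qcsa_scheme_rate_general N L h2L α f hdist u v hu hv x1 x2 a ha MQ hMQ
end

section
/- Let G, H ∈ F_q^{2N×N} with [G H] invertible and G SSO, and let M = [0_N I_N][G H]^{-1}. For any invertible N×N matrix T, the matrix G' = G·T is also SSO, [G' H] is invertible, and the resulting channel matrix M' = [0_N I_N][G' H]^{-1} equals M (the N-sum box channel matrix depends only on the column space of G). -/
/-!
Replacing `G` by `G * T` is right multiplication of `[G H]` by the block-diagonal unit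
`D = diag(T, 1)`. Invertibility, rank and the isotropy `Gᵀ J G = 0` are preserved, and
`[0 I] * D = [0 I]`, so `[0 I] * ([G H] * D)⁻¹ = [0 I] * D⁻¹ * [G H]⁻¹ = [0 I] * [G H]⁻¹`.
-/

open Matrix

namespace Matrix

variable {α l m n₁ n₂ : Type*}

theorem fromCols_mul_fromBlocks_one [Semiring α] [Fintype n₁] [Fintype n₂] [DecidableEq n₂]
    (A : Matrix m n₁ α) (B : Matrix m n₂ α) (T : Matrix n₁ n₁ α) :
    fromCols A B * fromBlocks T 0 0 (1 : Matrix n₂ n₂ α) = fromCols (A * T) B := by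
  simp [fromCols_mul_fromBlocks]

theorem transpose_mul_mul_mul_right [CommSemiring α] [Fintype n₁] [Fintype n₂]
    (G : Matrix n₂ n₁ α) (J : Matrix n₂ n₂ α) (T : Matrix n₁ n₁ α) :
    (G * T)ᵀ * J * (G * T) = Tᵀ * (Gᵀ * J * G) * T := by
  simp only [transpose_mul, Matrix.mul_assoc]

variable [CommRing α] [Fintype m] [DecidableEq m]

theorem mul_inv_mul_right_of_mul_eq_self {K : Matrix l m α} {P Q : Matrix m m α}
    (hQ : IsUnit Q) (hKQ : K * Q = K) : K * (P * Q)⁻¹ = K * P⁻¹ := by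
  have hKQinv : K * Q⁻¹ = K :=
    calc K * Q⁻¹ = K * Q * Q⁻¹ := by rw [hKQ]
      _ = K := mul_nonsing_inv_cancel_right Q K ((isUnit_iff_isUnit_det Q).mp hQ)
  rw [mul_inv_rev, ← Matrix.mul_assoc, hKQinv]

end Matrix

theorem channel_matrix_depends_only_on_colspace_general {F : Type*} [Field F]
    (N : ℕ)
    (G H : Matrix (Fin N ⊕ Fin N) (Fin N) F)
    (J : Matrix (Fin N ⊕ Fin N) (Fin N ⊕ Fin N) F)
    (hGH : IsUnit (Matrix.fromCols G H))
    (hrk : G.rank = N) (hsso : Gᵀ * J * G = 0)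
    (M : Matrix (Fin N) (Fin N ⊕ Fin N) F)
    (hM : M = Matrix.fromCols (0 : Matrix (Fin N) (Fin N) F) 1 * (Matrix.fromCols G H)⁻¹)
    (T : Matrix (Fin N) (Fin N) F) (hT : IsUnit T) :
    ((G * T).rank = N ∧ (G * T)ᵀ * J * (G * T) = 0) ∧
    IsUnit (Matrix.fromCols (G * T) H) ∧
    Matrix.fromCols (0 : Matrix (Fin N) (Fin N) F) 1 *
      (Matrix.fromCols (G * T) H)⁻¹ = M := by
  set D : Matrix (Fin N ⊕ Fin N) (Fin N ⊕ Fin N) F := fromBlocks T 0 0 1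
  have hD : IsUnit D := isUnit_fromBlocks_zero₂₁.mpr ⟨hT, isUnit_one⟩
  have hGTH : fromCols (G * T) H = fromCols G H * D := (fromCols_mul_fromBlocks_one G H T).symm
  have hD_fixes : fromCols (0 : Matrix (Fin N) (Fin N) F) (1 : Matrix (Fin N) (Fin N) F) * D =
      fromCols 0 1 := by
    rw [fromCols_mul_fromBlocks_one, Matrix.zero_mul]
  refine ⟨⟨?_, ?_⟩, hGTH ▸ hGH.mul hD, ?_⟩
  · rw [rank_mul_eq_left_of_isUnit_det _ _ ((isUnit_iff_isUnit_det T).mp hT), hrk]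
  · rw [transpose_mul_mul_mul_right, hsso, Matrix.mul_zero, Matrix.zero_mul]
  · rw [hM, hGTH]
    -- The goal's product elaborated with the defeq `CStarMatrix` instance, which `rw` cannot match.
    exact mul_inv_mul_right_of_mul_eq_self hD hD_fixes

theorem channel_matrix_depends_only_on_colspace {F : Type*} [Field F] [Fintype F]
    (N : ℕ) (hN : 1 ≤ N)
    (G H : Matrix (Fin N ⊕ Fin N) (Fin N) F)
    (J : Matrix (Fin N ⊕ Fin N) (Fin N ⊕ Fin N) F)
    (hJ : J = Matrix.fromBlocks 0 (-1) 1 0)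
    (hGH : IsUnit (Matrix.fromCols G H))
    (hrk : G.rank = N) (hsso : Gᵀ * J * G = 0)
    (M : Matrix (Fin N) (Fin N ⊕ Fin N) F)
    (hM : M = Matrix.fromCols (0 : Matrix (Fin N) (Fin N) F) 1 * (Matrix.fromCols G H)⁻¹)
    (T : Matrix (Fin N) (Fin N) F) (hT : IsUnit T) :
    ((G * T).rank = N ∧ (G * T)ᵀ * J * (G * T) = 0) ∧
    IsUnit (Matrix.fromCols (G * T) H) ∧
    Matrix.fromCols (0 : Matrix (Fin N) (Fin N) F) 1 *
      (Matrix.fromCols (G * T) H)⁻¹ = M :=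
  channel_matrix_depends_only_on_colspace_general N G H J hGH hrk hsso M hM T hT
end
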